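/- Let n be a natural number and let S, T be subspaces of ℂⁿ such that 2 · dim α(S,T) = n, where α(S,T) = ((T ⊔ Sᗮ) ⊓ S) ⊓ (S ⊓ T)ᗮ. Then 2 · dim S = n, 2 · dim T = n, S ⊓ T = ⊥, and S ⊓ Tᗮ = ⊥. -/

import Mathlib

/-!
Write `P = (T ⊔ Sᗮ) ⊓ S`, the orthogonal projection of `T` onto `S`. Since `S ⊓ T ≤ P`, the
dimension of `α(S,T) = P ⊓ (S ⊓ T)ᗮ` is `dim P - dim (S ⊓ T)`. Projecting `T` onto `S` has kernel
`T ⊓ Sᗮ`, so `dim P = dim T - dim (T ⊓ Sᗮ)`; and `P` is orthogonal to `S ⊓ Tᗮ` inside `S`, so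
`dim P + dim (S ⊓ Tᗮ) ≤ dim S`. Together with `dim S + dim T ≤ n + dim (S ⊓ T)`, the hypothesis
`2 dim α = n` leaves no room: the three intersections vanish and `dim S = dim T = dim α`.
-/

open Module

namespace Submodule

variable {𝕜 E : Type*} [RCLike 𝕜] [NormedAddCommGroup E] [InnerProductSpace 𝕜 E]
  [FiniteDimensional 𝕜 E]

theorem finrank_sup_orthogonal_inf_add_finrank_inf_orthogonal (S T : Submodule 𝕜 E) :
    finrank 𝕜 ((T ⊔ Sᗮ) ⊓ S : Submodule 𝕜 E) + finrank 𝕜 (T ⊓ Sᗮ : Submodule 𝕜 E) =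
      finrank 𝕜 T := by
  have hP := finrank_add_inf_finrank_orthogonal (le_sup_right : Sᗮ ≤ T ⊔ Sᗮ)
  rw [orthogonal_orthogonal, inf_comm] at hP
  have hsup := finrank_sup_add_finrank_inf_eq T Sᗮ
  omega

theorem disjoint_sup_orthogonal_inf_orthogonal (S T : Submodule 𝕜 E) :
    Disjoint (T ⊔ Sᗮ) (S ⊓ Tᗮ) := by
  rw [← orthogonal_orthogonal S, inf_orthogonal, sup_comm Sᗮ, orthogonal_orthogonal]
  exact orthogonal_disjoint _

theorem finrank_sup_orthogonal_inf_add_finrank_inf_orthogonal_le (S T : Submodule 𝕜 E) :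
    finrank 𝕜 ((T ⊔ Sᗮ) ⊓ S : Submodule 𝕜 E) + finrank 𝕜 (S ⊓ Tᗮ : Submodule 𝕜 E) ≤
      finrank 𝕜 S := by
  have h := finrank_sup_add_finrank_inf_eq ((T ⊔ Sᗮ) ⊓ S) (S ⊓ Tᗮ)
  rw [((disjoint_sup_orthogonal_inf_orthogonal S T).mono_left inf_le_left).eq_bot,
    finrank_bot] at h
  have hS := finrank_mono (sup_le inf_le_right inf_le_left : (T ⊔ Sᗮ) ⊓ S ⊔ S ⊓ Tᗮ ≤ S)
  omega

theorem eq_bot_and_two_mul_finrank_eq_of_two_mul_finrank_eq (S T : Submodule 𝕜 E)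
    (h : 2 * finrank 𝕜 (((T ⊔ Sᗮ) ⊓ S) ⊓ (S ⊓ T)ᗮ : Submodule 𝕜 E) = finrank 𝕜 E) :
    2 * finrank 𝕜 S = finrank 𝕜 E ∧ 2 * finrank 𝕜 T = finrank 𝕜 E ∧
      S ⊓ T = ⊥ ∧ S ⊓ Tᗮ = ⊥ := by
  have hα := finrank_add_inf_finrank_orthogonal
    (le_inf (inf_le_right.trans le_sup_left) inf_le_left : S ⊓ T ≤ (T ⊔ Sᗮ) ⊓ S)
  rw [inf_comm (S ⊓ T)ᗮ] at hα
  have hP := finrank_sup_orthogonal_inf_add_finrank_inf_orthogonal S T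
  have hPS := finrank_sup_orthogonal_inf_add_finrank_inf_orthogonal_le S T
  have hST := finrank_sup_add_finrank_inf_eq S T
  have hsup := finrank_le (S ⊔ T)
  have hx : finrank 𝕜 (S ⊓ T : Submodule 𝕜 E) = 0 := by omega
  have hy : finrank 𝕜 (S ⊓ Tᗮ : Submodule 𝕜 E) = 0 := by omega
  exact ⟨by omega, by omega, finrank_eq_zero.mp hx, finrank_eq_zero.mp hy⟩

end Submodule

/-- If `2 · dim α(S,T) = n` with `α(S,T) = ((T ⊔ Sᗮ) ⊓ S) ⊓ (S ⊓ T)ᗮ`, then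
`2 · dim S = n`, `2 · dim T = n`, `S ⊓ T = ⊥` and `S ⊓ Tᗮ = ⊥`. -/
theorem stmt_8 (n : ℕ) (S T : Submodule ℂ (EuclideanSpace ℂ (Fin n)))
    (h : 2 * Module.finrank ℂ
        ((((T ⊔ Sᗮ) ⊓ S) ⊓ (S ⊓ T)ᗮ) : Submodule ℂ (EuclideanSpace ℂ (Fin n))) = n) :
    2 * Module.finrank ℂ S = n ∧ 2 * Module.finrank ℂ T = n ∧
      S ⊓ T = ⊥ ∧ S ⊓ Tᗮ = ⊥ := by
  simpa only [finrank_euclideanSpace_fin] using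
    Submodule.eq_bot_and_two_mul_finrank_eq_of_two_mul_finrank_eq S T
      (h.trans finrank_euclideanSpace_fin.symm)
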